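/- Fix positive integers $k, l$, natural numbers $n_1,\ldots,n_k$ and $e_1,\ldots,e_l$ with $e_1 + \cdots + e_l = n_1 + \cdots + n_k$, and let $A$ denote the matrix count defined below. Suppose $s$ is such that $2^s > n_1 + \cdots + n_k$, and let $r_1, \ldots, r_l$ be positive multiples of $2^s$, with $n_{k+1} = r_1 + \cdots + r_l$. Then $A(n_1,\ldots,n_k,n_{k+1};\ e_1+r_1,\ldots,e_l+r_l) = A(n_1,\ldots,n_k;\ e_1,\ldots,e_l)$. -/

import Mathlib

/-!
In a matrix counted on the left, every entry of the first `k` rows is below `2 ^ s`. Reducing a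
column modulo `2 ^ s` keeps its entries bitwise disjoint, so the reduced column sums to a number
below `2 ^ s` that is congruent to `e j + r j ≡ e j`; hence it equals `e j`. Summing over the
columns, the residues of the last row modulo `2 ^ s` add up to `∑ e - ∑ n = 0`, which forces the
first `k` rows to have column sums `e j` and the last row to be `r`. So the left-hand matrices are
exactly the right-hand ones with the row `r` appended.
-/

open Finset

namespace Nat

theorem add_eq_or_of_and_eq_zero {a b : ℕ} (h : a &&& b = 0) : a + b = a ||| b := by
  induction a using Nat.strong_induction_on generalizing b with
  | _ a ih =>
    rcases Nat.eq_zero_or_pos a with rfl | ha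
    · simp
    have hhalf : a / 2 + b / 2 = a / 2 ||| b / 2 :=
      ih (a / 2) (Nat.div_lt_self ha (by norm_num)) (by rw [← Nat.and_div_two, h])
    have hlow : ¬(a % 2 = 1 ∧ b % 2 = 1) := by
      rw [← Nat.and_mod_two_eq_one, h]
      norm_num
    have := Nat.or_mod_two_eq_one (a := a) (b := b)
    have := Nat.or_div_two (a := a) (b := b)
    omega

theorem and_mod_two_pow_eq_zero {a b : ℕ} (s : ℕ) (h : a &&& b = 0) :
    a % 2 ^ s &&& b % 2 ^ s = 0 := by
  rw [← Nat.and_mod_two_pow, h, Nat.zero_mod]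

theorem and_sum_eq_zero {ι : Type*} {T : Finset ι} {f : ι → ℕ}
    (hf : (T : Set ι).Pairwise fun i i' => f i &&& f i' = 0) {a : ℕ}
    (ha : ∀ i ∈ T, a &&& f i = 0) : a &&& ∑ i ∈ T, f i = 0 := by
  classical
  induction T using Finset.induction_on generalizing a with
  | empty => simp
  | @insert x T hx ih =>
    have hfT : ∀ b, (∀ i ∈ T, b &&& f i = 0) → b &&& ∑ i ∈ T, f i = 0 :=
      fun b hb => ih (hf.mono (by simp)) hb
    have hxT : f x &&& ∑ i ∈ T, f i = 0 :=
      hfT (f x) fun i hi => hf (mem_insert_self x T) (mem_insert_of_mem hi) fun h => hx (h ▸ hi)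
    rw [sum_insert hx, add_eq_or_of_and_eq_zero hxT, Nat.and_or_distrib_left,
      ha x (mem_insert_self x T), hfT a fun i hi => ha i (mem_insert_of_mem hi)]
    rfl

theorem sum_lt_two_pow_of_pairwise_and_eq_zero {ι : Type*} {T : Finset ι} {f : ι → ℕ} {s : ℕ}
    (hf : (T : Set ι).Pairwise fun i i' => f i &&& f i' = 0) (hlt : ∀ i ∈ T, f i < 2 ^ s) :
    ∑ i ∈ T, f i < 2 ^ s := by
  classical
  induction T using Finset.induction_on with
  | empty => simp
  | @insert x T hx ih =>
    have hfT : (T : Set ι).Pairwise fun i i' => f i &&& f i' = 0 :=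
      hf.mono (by simp)
    have hxT : f x &&& ∑ i ∈ T, f i = 0 :=
      and_sum_eq_zero hfT fun i hi =>
        hf (mem_insert_self x T) (mem_insert_of_mem hi) fun h => hx (h ▸ hi)
    rw [sum_insert hx, add_eq_or_of_and_eq_zero hxT]
    exact Nat.or_lt_two_pow (hlt x (mem_insert_self x T))
      (ih hfT fun i hi => hlt i (mem_insert_of_mem hi))

theorem sum_mod_two_pow_eq_of_pairwise_and_eq_zero {ι : Type*} [Fintype ι] {f : ι → ℕ}
    {s c : ℕ} (hf : Pairwise fun i i' => f i &&& f i' = 0) (hc : c < 2 ^ s)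
    (hsum : ∑ i, f i ≡ c [MOD 2 ^ s]) : ∑ i, f i % 2 ^ s = c := by
  refine Nat.ModEq.eq_of_lt_of_lt ?_ ?_ hc
  · exact ((Finset.sum_nat_mod _ _ _).symm.trans hsum :)
  · exact sum_lt_two_pow_of_pairwise_and_eq_zero
      ((hf.mono fun i i' h => and_mod_two_pow_eq_zero s h).set_pairwise _)
      fun i _ => Nat.mod_lt _ (Nat.two_pow_pos s)

theorem and_eq_zero_of_two_pow_dvd_of_lt {a b s : ℕ} (ha : 2 ^ s ∣ a) (hb : b < 2 ^ s) :
    a &&& b = 0 := by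
  rw [← Nat.mod_eq_of_lt ((Nat.and_le_right).trans_lt hb), Nat.and_mod_two_pow,
    Nat.mod_eq_zero_of_dvd ha, Nat.zero_and]

end Nat

def bitDisjointMatrices {ι κ : Type*} [Fintype ι] [Fintype κ] (rowSum : ι → ℕ)
    (colSum : κ → ℕ) : Set (ι → κ → ℕ) :=
  {M | (∀ i j, 0 < M i j) ∧ (∀ i, ∑ j, M i j = rowSum i) ∧ (∀ j, ∑ i, M i j = colSum j) ∧
    (∀ j, ∀ i i' : ι, i ≠ i' → M i j &&& M i' j = 0)}

theorem lt_of_row_sums_eq_of_sum_lt {ι κ : Type*} [Fintype ι] [Fintype κ] {R : ι → ℕ}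
    {N : ι → κ → ℕ} {b : ℕ} (hN : ∀ i, ∑ j, N i j = R i) (hR : ∑ i, R i < b) (i : ι) (j : κ) :
    N i j < b :=
  calc N i j ≤ R i := hN i ▸ single_le_sum (fun _ _ => Nat.zero_le _) (mem_univ j)
    _ ≤ ∑ i, R i := single_le_sum (fun _ _ => Nat.zero_le _) (mem_univ i)
    _ < b := hR

section AppendRow

variable {k l s : ℕ} {n : Fin k → ℕ} {e r : Fin l → ℕ}

theorem snoc_mem_bitDisjointMatrices (hs : ∑ i, n i < 2 ^ s) (hr : ∀ j, 0 < r j ∧ 2 ^ s ∣ r j)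
    {N : Fin k → Fin l → ℕ} (hN : N ∈ bitDisjointMatrices n e) :
    (Fin.snoc N r : Fin (k + 1) → Fin l → ℕ) ∈
      bitDisjointMatrices (Fin.snoc n (∑ j, r j) : Fin (k + 1) → ℕ) (e + r) := by
  obtain ⟨hpos, hrow, hcol, hdis⟩ := hN
  have hlt := lt_of_row_sums_eq_of_sum_lt hrow hs
  refine ⟨fun i j => ?_, fun i => ?_, fun j => ?_, fun j i i' hii' => ?_⟩
  · induction i using Fin.lastCases with
    | last => simpa using (hr j).1
    | cast i => simpa using hpos i j
  · induction i using Fin.lastCases with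
    | last => simp
    | cast i => simpa using hrow i
  · simp [Fin.sum_univ_castSucc, hcol j]
  · induction i using Fin.lastCases <;> induction i' using Fin.lastCases
    · exact absurd rfl hii'
    · simpa using Nat.and_eq_zero_of_two_pow_dvd_of_lt (hr j).2 (hlt _ j)
    · simpa [Nat.land_comm] using Nat.and_eq_zero_of_two_pow_dvd_of_lt (hr j).2 (hlt _ j)
    · simpa using hdis j _ _ fun h => hii' (congrArg _ h)

theorem last_eq_of_mem_bitDisjointMatrices_snoc (hsum : ∑ j, e j = ∑ i, n i)
    (hs : ∑ i, n i < 2 ^ s) (hr : ∀ j, 2 ^ s ∣ r j) {M : Fin (k + 1) → Fin l → ℕ}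
    (hM : M ∈ bitDisjointMatrices (Fin.snoc n (∑ j, r j) : Fin (k + 1) → ℕ) (e + r)) :
    M (Fin.last k) = r := by
  obtain ⟨-, hrow, hcol, hdis⟩ := hM
  have hrow' (i : Fin k) : ∑ j, M i.castSucc j = n i := by simpa using hrow i.castSucc
  have hlt := lt_of_row_sums_eq_of_sum_lt hrow' hs
  have hcol_mod (j : Fin l) : ∑ i : Fin k, M i.castSucc j + M (Fin.last k) j % 2 ^ s = e j := by
    have hmod : ∑ i, M i j ≡ e j [MOD 2 ^ s] := by
      simpa [hcol j] using (Nat.modEq_zero_iff_dvd.2 (hr j)).add_left (e j)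
    have he : e j < 2 ^ s :=
      (single_le_sum (fun _ _ => Nat.zero_le _) (mem_univ j)).trans_lt (hsum ▸ hs)
    have := Nat.sum_mod_two_pow_eq_of_pairwise_and_eq_zero (fun i i' => hdis j i i') he hmod
    rwa [Fin.sum_univ_castSucc, sum_congr rfl fun i _ => Nat.mod_eq_of_lt (hlt i j)] at this
  have hres : ∑ j, M (Fin.last k) j % 2 ^ s = 0 := by
    have := sum_congr rfl fun j (_ : j ∈ univ) => hcol_mod j
    rw [sum_add_distrib, sum_comm, sum_congr rfl fun i _ => hrow' i, hsum] at this
    simpa using this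
  funext j
  have := hcol j
  rw [Pi.add_apply, Fin.sum_univ_castSucc, ← hcol_mod j,
    sum_eq_zero_iff.1 hres j (mem_univ j)] at this
  simpa using this

theorem init_mem_bitDisjointMatrices {M : Fin (k + 1) → Fin l → ℕ}
    (hM : M ∈ bitDisjointMatrices (Fin.snoc n (∑ j, r j) : Fin (k + 1) → ℕ) (e + r))
    (hlast : M (Fin.last k) = r) : Fin.init M ∈ bitDisjointMatrices n e := by
  obtain ⟨hpos, hrow, hcol, hdis⟩ := hM
  refine ⟨fun i j => hpos _ j, fun i => by simpa [Fin.init] using hrow i.castSucc, fun j => ?_,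
    fun j i i' hii' => hdis j _ _ fun h => hii' (Fin.castSucc_injective k h)⟩
  have := hcol j
  rw [Fin.sum_univ_castSucc, hlast] at this
  simpa [Fin.init] using this

theorem bitDisjointMatrices_snoc_eq_image (hsum : ∑ j, e j = ∑ i, n i) (hs : ∑ i, n i < 2 ^ s)
    (hr : ∀ j, 0 < r j ∧ 2 ^ s ∣ r j) :
    bitDisjointMatrices (Fin.snoc n (∑ j, r j) : Fin (k + 1) → ℕ) (e + r) =
      (fun N => Fin.snoc N r) '' bitDisjointMatrices n e := by
  ext M
  constructor
  · intro hM
    have hlast := last_eq_of_mem_bitDisjointMatrices_snoc hsum hs (fun j => (hr j).2) hM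
    exact ⟨Fin.init M, init_mem_bitDisjointMatrices hM hlast, hlast ▸ Fin.snoc_init_self M⟩
  · rintro ⟨N, hN, rfl⟩
    exact snoc_mem_bitDisjointMatrices hs hr hN

end AppendRow

theorem matrix_count_extend_general (k l : ℕ)
    (n : Fin k → ℕ) (e : Fin l → ℕ) (s : ℕ) (r : Fin l → ℕ)
    (hsum : ∑ j, e j = ∑ i, n i)
    (hs : ∑ i, n i < 2 ^ s)
    (hr : ∀ j, 0 < r j ∧ 2 ^ s ∣ r j) :
    Set.ncard {M : Fin (k + 1) → Fin l → ℕ |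
        (∀ i j, 0 < M i j) ∧
        (∀ i, ∑ j, M i j = (Fin.snoc n (∑ j, r j) : Fin (k + 1) → ℕ) i) ∧
        (∀ j, ∑ i, M i j = e j + r j) ∧
        (∀ j, ∀ i i' : Fin (k + 1), i ≠ i' → M i j &&& M i' j = 0)}
      = Set.ncard {M : Fin k → Fin l → ℕ |
          (∀ i j, 0 < M i j) ∧ (∀ i, ∑ j, M i j = n i) ∧
          (∀ j, ∑ i, M i j = e j) ∧
          (∀ j, ∀ i i' : Fin k, i ≠ i' → M i j &&& M i' j = 0)} := by
  change (bitDisjointMatrices (Fin.snoc n (∑ j, r j) : Fin (k + 1) → ℕ) (e + r)).ncard =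
    (bitDisjointMatrices n e).ncard
  rw [bitDisjointMatrices_snoc_eq_image hsum hs hr]
  exact Set.ncard_image_of_injective _ fun _ _ h => (Fin.snoc_injective2 h).1

/-- Adding a new row with large entries: if `2^s > ∑ n i`, the `r j` are positive
multiples of `2^s`, and `∑ e j = ∑ n i`, then the count of matrices with the extra
row sum `∑ r j` and column sums `e j + r j` equals the original count. -/
theorem matrix_count_extend (k l : ℕ) (hk : 0 < k) (hl : 0 < l)
    (n : Fin k → ℕ) (e : Fin l → ℕ) (s : ℕ) (r : Fin l → ℕ)
    (hsum : ∑ j, e j = ∑ i, n i)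
    (hs : ∑ i, n i < 2 ^ s)
    (hr : ∀ j, 0 < r j ∧ 2 ^ s ∣ r j) :
    Set.ncard {M : Fin (k + 1) → Fin l → ℕ |
        (∀ i j, 0 < M i j) ∧
        (∀ i, ∑ j, M i j = (Fin.snoc n (∑ j, r j) : Fin (k + 1) → ℕ) i) ∧
        (∀ j, ∑ i, M i j = e j + r j) ∧
        (∀ j, ∀ i i' : Fin (k + 1), i ≠ i' → M i j &&& M i' j = 0)}
      = Set.ncard {M : Fin k → Fin l → ℕ |
          (∀ i j, 0 < M i j) ∧ (∀ i, ∑ j, M i j = n i) ∧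
          (∀ j, ∑ i, M i j = e j) ∧
          (∀ j, ∀ i i' : Fin k, i ≠ i' → M i j &&& M i' j = 0)} :=
  matrix_count_extend_general k l n e s r hsum hs hr
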